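/- arXiv:2502.13631 — 2 statements merged into one kernel-verified Lean document; each statement's English description precedes it below -/
import Mathlib

section
/- For any instance of Pm||∑w_jC_j, there exists a WSPT schedule σ whose deviation vector satisfies |Δ_{i,ℓ}| ≤ p_max for all 1 ≤ i ≤ k and 1 ≤ ℓ ≤ m, and consequently g(σ) ≤ m·w_max·p_max². -/
/-- Total processing time of jobs with efficiency at least `t` assigned to machine `ℓ`
by the assignment `σ` (in a WSPT schedule the job order on each machine is by
non-increasing efficiency, so the assignment determines the schedule). -/
def mLoad {n m : ℕ} (p w : Fin n → ℕ) (σ : Fin n → Fin m) (t : ℚ) (ℓ : Fin m) : ℚ :=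
  ∑ j ∈ Finset.univ.filter (fun j => t ≤ (w j : ℚ) / (p j : ℚ) ∧ σ j = ℓ), (p j : ℚ)

/-- Total processing time of all jobs with efficiency at least `t`. -/
def totLoad {n : ℕ} (p w : Fin n → ℕ) (t : ℚ) : ℚ :=
  ∑ j ∈ Finset.univ.filter (fun j => t ≤ (w j : ℚ) / (p j : ℚ)), (p j : ℚ)

/-- The deviation `Δ_{i,ℓ} = μ_i − P(J₁^ℓ ∪ ⋯ ∪ J_i^ℓ)` at efficiency threshold `t`. -/
def dev {n m : ℕ} (p w : Fin n → ℕ) (σ : Fin n → Fin m) (t : ℚ) (ℓ : Fin m) : ℚ :=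
  totLoad p w t / m - mLoad p w σ t ℓ

/-- Goemans–Williamson expression for the total weighted completion time of the
WSPT schedule determined by the assignment `σ`, where `e 0 > e 1 > ⋯ > e (k-1)` are
the distinct efficiencies and `e k = 0`. -/
def fObj {n m : ℕ} (p w : Fin n → ℕ) (e : ℕ → ℚ) (k : ℕ) (σ : Fin n → Fin m) : ℚ :=
  (∑ i ∈ Finset.range k, (e i - e (i + 1)) * ∑ ℓ : Fin m, (mLoad p w σ (e i) ℓ) ^ 2
    + ∑ j : Fin n, (w j : ℚ) * (p j : ℚ)) / 2

/-- The function `g(σ) = ∑_i (e_(i) − e_(i+1)) ∑_ℓ Δ_{i,ℓ}²`. -/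
def gObj {n m : ℕ} (p w : Fin n → ℕ) (e : ℕ → ℚ) (k : ℕ) (σ : Fin n → Fin m) : ℚ :=
  ∑ i ∈ Finset.range k, (e i - e (i + 1)) * ∑ ℓ : Fin m, (dev p w σ (e i) ℓ) ^ 2

/-!
Assign the jobs in order of non-increasing efficiency, each to a currently least-loaded machine.
The jobs of efficiency at least `e i` form a prefix of that order, so their loads are the loads at
an intermediate stage of the greedy process; and at every stage the loads differ pairwise by at
most `p_max`, because a job of size at most `p_max` only ever goes to a machine of minimum load.
The average load `μ_i` therefore lies within `p_max` of every machine's load, and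
`g(σ) ≤ ∑ᵢ (e i - e (i + 1)) · m · p_max² = e 0 · m · p_max² ≤ m · w_max · p_max²`.
-/

open Finset

theorem List.Pairwise.exists_eq_append_of_imp {α : Type*} {r : α → α → Prop} {q : α → Prop}
    (hq : ∀ a b, r a b → q a → q b) {l : List α} (hl : l.Pairwise r) :
    ∃ l₂ l₁, l = l₂ ++ l₁ ∧ (∀ x ∈ l₂, ¬ q x) ∧ ∀ x ∈ l₁, q x := by
  induction l with
  | nil => exact ⟨[], [], rfl, by simp, by simp⟩
  | cons a t ih =>
    obtain ⟨hat, ht⟩ := List.pairwise_cons.mp hl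
    by_cases hqa : q a
    · refine ⟨[], a :: t, rfl, by simp, ?_⟩
      rintro x (_ | ⟨_, hx⟩)
      exacts [hqa, hq a x (hat x hx) hqa]
    · obtain ⟨l₂, l₁, rfl, h₂, h₁⟩ := ih ht
      refine ⟨a :: l₂, l₁, rfl, ?_, h₁⟩
      rintro x (_ | ⟨_, hx⟩)
      exacts [hqa, h₂ x hx]

theorem exists_nodup_pairwise_le_comp {ι α : Type*} [Fintype ι] [LinearOrder α] (f : ι → α) :
    ∃ l : List ι, l.Nodup ∧ (∀ j, j ∈ l) ∧ l.Pairwise (fun a b => f a ≤ f b) := by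
  have hperm := List.mergeSort_perm univ.toList (fun a b => decide (f a ≤ f b))
  refine ⟨_, hperm.nodup_iff.mpr (nodup_toList _),
    fun j => hperm.mem_iff.mpr (mem_toList.mpr (mem_univ j)), ?_⟩
  refine (List.pairwise_mergeSort (fun a b c hab hbc => ?_) (fun a b => ?_) _).imp
    of_decide_eq_true
  · simp only [decide_eq_true_eq] at *
    exact hab.trans hbc
  · simpa using le_total (f a) (f b)

theorem abs_sum_div_card_sub_le {κ R : Type*} [Fintype κ] [Nonempty κ] [Field R] [LinearOrder R]
    [IsStrictOrderedRing R] {L : κ → R} {B : R} (hL : ∀ a b, L a - L b ≤ B) (ℓ : κ) :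
    |(∑ a, L a) / Fintype.card κ - L ℓ| ≤ B := by
  rw [← card_univ, ← expect_eq_sum_div_card, abs_sub_le_iff]
  constructor
  · have : univ.expect L ≤ L ℓ + B :=
      expect_le univ_nonempty fun a _ => by linarith [hL a ℓ]
    linarith
  · have : L ℓ - B ≤ univ.expect L :=
      le_expect univ_nonempty fun a _ => by linarith [hL ℓ a]
    linarith

theorem add_ite_sub_add_ite_le {κ R : Type*} [DecidableEq κ] [Field R] [LinearOrder R]
    [IsStrictOrderedRing R] {L : κ → R} {B x : R} {ℓ₀ : κ} (hL : ∀ a b, L a - L b ≤ B)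
    (hmin : ∀ b, L ℓ₀ ≤ L b) (hx0 : 0 ≤ x) (hxB : x ≤ B) (a b : κ) :
    (L a + if ℓ₀ = a then x else 0) - (L b + if ℓ₀ = b then x else 0) ≤ B := by
  have := hL a b
  split_ifs with ha hb hb
  · linarith
  · subst ha; linarith [hmin b]
  · linarith
  · linarith

noncomputable def leastLoaded {κ R : Type*} [Finite κ] [Nonempty κ] [LinearOrder R]
    (L : κ → R) : κ :=
  (Finite.exists_min L).choose

theorem leastLoaded_le {κ R : Type*} [Finite κ] [Nonempty κ] [LinearOrder R] (L : κ → R)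
    (ℓ : κ) : L (leastLoaded L) ≤ L ℓ :=
  (Finite.exists_min L).choose_spec ℓ

section ListScheduling

variable {ι κ R : Type*} [DecidableEq ι] [DecidableEq κ]

def machineLoad [AddCommMonoid R] (P : ι → R) (σ : ι → κ) (s : Finset ι) (ℓ : κ) : R :=
  ∑ j ∈ s with σ j = ℓ, P j

theorem machineLoad_update_insert [AddCommMonoid R] (P : ι → R) (σ : ι → κ) {s : Finset ι}
    {j : ι} (hj : j ∉ s) (ℓ₀ ℓ : κ) :
    machineLoad P (Function.update σ j ℓ₀) (insert j s) ℓ =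
      machineLoad P σ s ℓ + if ℓ₀ = ℓ then P j else 0 := by
  have hs : ∑ i ∈ s with Function.update σ j ℓ₀ i = ℓ, P i = machineLoad P σ s ℓ :=
    sum_congr (filter_congr fun i hi => by
      rw [Function.update_of_ne (ne_of_mem_of_not_mem hi hj)]) fun _ _ => rfl
  rw [machineLoad, filter_insert, Function.update_self]
  split_ifs with h
  · rw [sum_insert (by simp [hj]), hs, add_comm]
  · rw [hs, add_zero]

variable [Finite κ] [Nonempty κ]

/-- The head of the list is the job scheduled last, so a list sorted by non-decreasing efficiency
is scheduled in WSPT order. -/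
noncomputable def listSchedule [AddCommMonoid R] [LinearOrder R] (P : ι → R) : List ι → ι → κ
  | [] => fun _ => Classical.arbitrary κ
  | j :: l => Function.update (listSchedule P l) j
      (leastLoaded (machineLoad P (listSchedule P l) l.toFinset))

theorem listSchedule_append_apply [AddCommMonoid R] [LinearOrder R] (P : ι → R)
    {l₂ l₁ : List ι} (hl : (l₂ ++ l₁).Nodup) {j : ι} (hj : j ∈ l₁) :
    (listSchedule P (l₂ ++ l₁) j : κ) = listSchedule P l₁ j := by
  induction l₂ with
  | nil => rfl
  | cons a t ih =>
    have haj : j ≠ a := fun h => (List.nodup_cons.mp hl).1 (List.mem_append_right t (h ▸ hj))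
    rw [List.cons_append, listSchedule, Function.update_of_ne haj, ih (List.nodup_cons.mp hl).2]

theorem machineLoad_listSchedule_append [AddCommMonoid R] [LinearOrder R] (P : ι → R)
    {l₂ l₁ : List ι} (hl : (l₂ ++ l₁).Nodup) :
    (machineLoad P (listSchedule P (l₂ ++ l₁)) l₁.toFinset : κ → R) =
      machineLoad P (listSchedule P l₁) l₁.toFinset := by
  funext ℓ
  refine sum_congr (filter_congr fun j hj => ?_) fun _ _ => rfl
  rw [listSchedule_append_apply P hl (List.mem_toFinset.mp hj)]

theorem listSchedule_machineLoad_sub_le [Field R] [LinearOrder R] [IsStrictOrderedRing R]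
    {P : ι → R} {B : R} (hP0 : ∀ j, 0 ≤ P j) (hPB : ∀ j, P j ≤ B) (hB : 0 ≤ B)
    {l : List ι} (hl : l.Nodup) (a b : κ) :
    machineLoad P (listSchedule P l) l.toFinset a -
      machineLoad P (listSchedule P l) l.toFinset b ≤ B := by
  induction l generalizing a b with
  | nil => simpa [machineLoad] using hB
  | cons j l ih =>
    obtain ⟨hj, hl⟩ := List.nodup_cons.mp hl
    rw [List.toFinset_cons, listSchedule,
      machineLoad_update_insert _ _ (List.mem_toFinset.not.mpr hj),
      machineLoad_update_insert _ _ (List.mem_toFinset.not.mpr hj)]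
    exact add_ite_sub_add_ite_le (ih hl) (leastLoaded_le _) (hP0 j) (hPB j) a b

theorem exists_machineLoad_sub_le [Field R] [LinearOrder R] [IsStrictOrderedRing R]
    [Fintype ι] {α : Type*} [LinearOrder α] (f : ι → α) {P : ι → R} {B : R}
    (hP0 : ∀ j, 0 ≤ P j) (hPB : ∀ j, P j ≤ B) (hB : 0 ≤ B) :
    ∃ σ : ι → κ, ∀ t a b,
      machineLoad P σ {j | t ≤ f j} a - machineLoad P σ {j | t ≤ f j} b ≤ B := by
  obtain ⟨l, hnd, hmem, hsort⟩ := exists_nodup_pairwise_le_comp f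
  refine ⟨listSchedule P l, fun t => ?_⟩
  obtain ⟨l₂, l₁, rfl, h₂, h₁⟩ :=
    hsort.exists_eq_append_of_imp (q := fun j => t ≤ f j) fun a b hab ha => ha.trans hab
  have hset : ({j | t ≤ f j} : Finset ι) = l₁.toFinset := by
    ext j
    simp only [mem_filter, mem_univ, true_and, List.mem_toFinset]
    refine ⟨fun hj => ?_, h₁ j⟩
    rcases List.mem_append.mp (hmem j) with hj₂ | hj₁
    exacts [absurd hj (h₂ j hj₂), hj₁]
  rw [hset, machineLoad_listSchedule_append P hnd]
  exact listSchedule_machineLoad_sub_le hP0 hPB hB hnd.of_append_right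

end ListScheduling

section WSPT

variable {n m : ℕ} (p w : Fin n → ℕ) (σ : Fin n → Fin m)

theorem mLoad_eq_machineLoad (t : ℚ) (ℓ : Fin m) :
    mLoad p w σ t ℓ = machineLoad (fun j => (p j : ℚ)) σ {j | t ≤ (w j : ℚ) / p j} ℓ := by
  rw [mLoad, machineLoad, filter_filter]

theorem totLoad_eq_sum_mLoad (t : ℚ) : totLoad p w t = ∑ ℓ, mLoad p w σ t ℓ := by
  simp only [mLoad_eq_machineLoad, machineLoad, sum_fiberwise, totLoad]

theorem abs_dev_le [NeZero m] {t B : ℚ} (h : ∀ a b, mLoad p w σ t a - mLoad p w σ t b ≤ B)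
    (ℓ : Fin m) : |dev p w σ t ℓ| ≤ B := by
  simpa only [dev, totLoad_eq_sum_mLoad p w σ, Fintype.card_fin] using abs_sum_div_card_sub_le h ℓ

theorem gObj_le_of_abs_dev_le {e : ℕ → ℚ} {k : ℕ} {B : ℚ} (hdec : ∀ i < k, e (i + 1) < e i)
    (hek : e k = 0) (hdev : ∀ i < k, ∀ ℓ, |dev p w σ (e i) ℓ| ≤ B) :
    gObj p w e k σ ≤ e 0 * (m * B ^ 2) := by
  calc gObj p w e k σ ≤ ∑ i ∈ range k, (e i - e (i + 1)) * (m * B ^ 2) := by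
        refine sum_le_sum fun i hi => ?_
        have hik := mem_range.mp hi
        refine mul_le_mul_of_nonneg_left ?_ (sub_nonneg.mpr (hdec i hik).le)
        calc ∑ ℓ, dev p w σ (e i) ℓ ^ 2 ≤ ∑ _ℓ : Fin m, B ^ 2 :=
              sum_le_sum fun ℓ _ => sq_le_sq' (abs_le.mp (hdev i hik ℓ)).1
                (abs_le.mp (hdev i hik ℓ)).2
          _ = m * B ^ 2 := by simp
    _ = e 0 * (m * B ^ 2) := by rw [← sum_mul, sum_range_sub', hek, sub_zero]

end WSPT

theorem stmt_13_general (m k n pmax wmax : ℕ) (hm : 0 < m) (hk : 0 < k)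
    (p w : Fin n → ℕ)
    (hp : ∀ j, 0 < p j) (hpmax : ∀ j, p j ≤ pmax)
    (hwmax : ∀ j, w j ≤ wmax)
    (e : ℕ → ℚ) (hdec : ∀ i < k, e (i + 1) < e i) (hek : e k = 0)
    (hrng : ∀ i < k, ∃ j, (w j : ℚ) / (p j : ℚ) = e i) :
    ∃ σ : Fin n → Fin m,
      (∀ i < k, ∀ ℓ : Fin m, |dev p w σ (e i) ℓ| ≤ (pmax : ℚ)) ∧
      gObj p w e k σ ≤ (m : ℚ) * (wmax : ℚ) * (pmax : ℚ) ^ 2 := by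
  have : NeZero m := ⟨hm.ne'⟩
  obtain ⟨σ, hσ⟩ := exists_machineLoad_sub_le (κ := Fin m) (fun j => (w j : ℚ) / p j)
    (P := fun j => (p j : ℚ)) (fun j => by positivity) (fun j => by exact_mod_cast hpmax j)
    (by positivity : (0 : ℚ) ≤ pmax)
  have hdev : ∀ i < k, ∀ ℓ, |dev p w σ (e i) ℓ| ≤ pmax := fun i _ =>
    abs_dev_le p w σ fun a b => by simpa only [mLoad_eq_machineLoad] using hσ (e i) a b
  obtain ⟨j, hj⟩ := hrng 0 hk
  have he0 : e 0 ≤ wmax := hj ▸ (div_le_self (by positivity) (by exact_mod_cast hp j)).trans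
    (by exact_mod_cast hwmax j)
  refine ⟨σ, hdev, ?_⟩
  calc gObj p w e k σ ≤ e 0 * (m * pmax ^ 2) := gObj_le_of_abs_dev_le p w σ hdec hek hdev
    _ ≤ wmax * (m * pmax ^ 2) := by gcongr
    _ = m * wmax * pmax ^ 2 := by ring

theorem stmt_13 (m k n pmax wmax : ℕ) (hm : 0 < m) (hk : 0 < k)
    (p w : Fin n → ℕ)
    (hp : ∀ j, 0 < p j) (hpmax : ∀ j, p j ≤ pmax)
    (hw : ∀ j, 0 < w j) (hwmax : ∀ j, w j ≤ wmax)
    (e : ℕ → ℚ) (hdec : ∀ i < k, e (i + 1) < e i) (hek : e k = 0)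
    (hcov : ∀ j, ∃ i < k, (w j : ℚ) / (p j : ℚ) = e i)
    (hrng : ∀ i < k, ∃ j, (w j : ℚ) / (p j : ℚ) = e i) :
    ∃ σ : Fin n → Fin m,
      (∀ i < k, ∀ ℓ : Fin m, |dev p w σ (e i) ℓ| ≤ (pmax : ℚ)) ∧
      gObj p w e k σ ≤ (m : ℚ) * (wmax : ℚ) * (pmax : ℚ) ^ 2 :=
  stmt_13_general m k n pmax wmax hm hk p w hp hpmax hwmax e hdec hek hrng
end

section
/- In any optimal WSPT schedule for an instance of P2||∑w_jC_j, for every efficiency index i the load difference δ_i between the two machines on jobs of efficiency at least e_(i) satisfies |δ_i| ≤ √(w_max)·p_max². -/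
/-!
With two machines `a² + b² = ((a + b)² + (a - b)²) / 2` and `a + b` does not depend on the
schedule, so `f(σ)` is a constant plus `¼ ∑ᵢ (e_(i) - e_(i+1)) δᵢ(σ)²`. Adding the jobs in order
of non-increasing efficiency, each to the machine that is lighter at that moment, gives a schedule
`τ` with `|δ| ≤ p_max` at every threshold; optimality of `σ` then gives
`∑ᵢ (e_(i) - e_(i+1)) δᵢ(σ)² ≤ e_(1) p_max² ≤ w_max p_max²`. Consecutive efficiencies are distinct
fractions with denominators at most `p_max` (and `e_(k+1) = 0`), so every gap is at least
`1 / p_max²`, and the `i`-th term alone yields `δᵢ² ≤ w_max p_max⁴`.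
-/

open Finset

theorem exists_fin_two_abs_sum_filter_le {ι α R : Type*} [DecidableEq ι] [LinearOrder α]
    [CommRing R] [LinearOrder R] [IsStrictOrderedRing R] (f : ι → α) (a : ι → R) {B : R}
    (hB : 0 ≤ B) (ha : ∀ j, 0 ≤ a j) (haB : ∀ j, a j ≤ B) (S : Finset ι) :
    ∃ τ : ι → Fin 2, ∀ t, |∑ j ∈ S with t ≤ f j, (-1) ^ (τ j : ℕ) * a j| ≤ B := by
  induction S using Finset.induction_on_min_value f with
  | empty => exact ⟨fun _ => 0, fun _ => by simpa using hB⟩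
  | insert j₀ s hj₀ hmin ih =>
    obtain ⟨τ, hτ⟩ := ih
    set D := ∑ j ∈ s, (-1) ^ (τ j : ℕ) * a j
    have hD : |D| ≤ B := by simpa [filter_true_of_mem hmin] using hτ (f j₀)
    obtain ⟨c, hc⟩ : ∃ c : Fin 2, |(-1) ^ (c : ℕ) * a j₀ + D| ≤ B := by
      obtain ⟨hD₁, hD₂⟩ := abs_le.mp hD
      by_cases hD0 : 0 ≤ D
      · refine ⟨1, abs_le.mpr ⟨?_, ?_⟩⟩ <;> simp <;> linarith [ha j₀, haB j₀]
      · refine ⟨0, abs_le.mpr ⟨?_, ?_⟩⟩ <;> simp <;> linarith [ha j₀, haB j₀]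
    have hsum : ∀ s' ⊆ s, ∑ j ∈ s', (-1) ^ (Function.update τ j₀ c j : ℕ) * a j
        = ∑ j ∈ s', (-1) ^ (τ j : ℕ) * a j := fun s' hs' => sum_congr rfl fun j hj => by
      rw [Function.update_of_ne (ne_of_mem_of_not_mem (hs' hj) hj₀)]
    refine ⟨Function.update τ j₀ c, fun t => ?_⟩
    by_cases ht : t ≤ f j₀
    · rwa [filter_insert, if_pos ht, filter_true_of_mem fun j hj => ht.trans (hmin j hj),
        sum_insert hj₀, hsum s subset_rfl, Function.update_self]
    · rw [filter_insert, if_neg ht, hsum _ (filter_subset _ _)]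
      exact hτ t

section Loads

variable {n m : ℕ} (p w : Fin n → ℕ)

theorem sum_mLoad (σ : Fin n → Fin m) (t : ℚ) : ∑ ℓ, mLoad p w σ t ℓ = totLoad p w t := by
  simp only [mLoad, totLoad, ← filter_filter]
  exact sum_fiberwise _ σ _

theorem sum_sq_mLoad (hm : m ≠ 0) (σ : Fin n → Fin m) (t : ℚ) :
    ∑ ℓ, mLoad p w σ t ℓ ^ 2 = totLoad p w t ^ 2 / m + ∑ ℓ, dev p w σ t ℓ ^ 2 := by
  simp only [dev, sub_sq, sum_add_distrib, sum_sub_distrib, ← mul_sum, sum_mLoad, sum_const,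
    card_univ, Fintype.card_fin, nsmul_eq_mul]
  field_simp
  ring

theorem fObj_eq_add_gObj (hm : m ≠ 0) (e : ℕ → ℚ) (k : ℕ) (σ : Fin n → Fin m) :
    fObj p w e k σ = (∑ i ∈ range k, (e i - e (i + 1)) * (totLoad p w (e i) ^ 2 / m)
      + ∑ j, (w j : ℚ) * p j) / 2 + gObj p w e k σ / 2 := by
  simp only [fObj, gObj, sum_sq_mLoad p w hm, mul_add, sum_add_distrib]
  ring

theorem gObj_le_gObj_of_fObj_le (hm : m ≠ 0) {e : ℕ → ℚ} {k : ℕ} {σ τ : Fin n → Fin m}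
    (h : fObj p w e k σ ≤ fObj p w e k τ) : gObj p w e k σ ≤ gObj p w e k τ := by
  rw [fObj_eq_add_gObj p w hm, fObj_eq_add_gObj p w hm] at h
  linarith

theorem sum_sq_dev_fin_two (σ : Fin n → Fin 2) (t : ℚ) :
    ∑ ℓ, dev p w σ t ℓ ^ 2 = (mLoad p w σ t 0 - mLoad p w σ t 1) ^ 2 / 2 := by
  simp only [dev, ← sum_mLoad p w σ, Fin.sum_univ_two, Nat.cast_ofNat]
  ring

theorem mLoad_zero_sub_mLoad_one (σ : Fin n → Fin 2) (t : ℚ) :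
    mLoad p w σ t 0 - mLoad p w σ t 1
      = ∑ j with t ≤ (w j : ℚ) / p j, (-1) ^ (σ j : ℕ) * (p j : ℚ) := by
  simp only [mLoad, ← filter_filter, sum_filter (fun j => σ j = _), ← sum_sub_distrib]
  refine sum_congr rfl fun j _ => ?_
  rcases Fin.exists_fin_two.mp ⟨σ j, rfl⟩ with h | h <;> simp [h]

theorem exists_abs_mLoad_zero_sub_mLoad_one_le {pmax : ℕ} (hpmax : ∀ j, p j ≤ pmax) :
    ∃ τ : Fin n → Fin 2, ∀ t, |mLoad p w τ t 0 - mLoad p w τ t 1| ≤ pmax := by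
  simp only [mLoad_zero_sub_mLoad_one]
  exact exists_fin_two_abs_sum_filter_le _ _ (Nat.cast_nonneg _) (fun j => Nat.cast_nonneg _)
    (fun j => by exact_mod_cast hpmax j) univ

theorem mul_sum_sq_dev_le_gObj {e : ℕ → ℚ} {k i : ℕ} (hmono : ∀ i < k, e (i + 1) ≤ e i)
    (σ : Fin n → Fin m) (hi : i < k) :
    (e i - e (i + 1)) * ∑ ℓ, dev p w σ (e i) ℓ ^ 2 ≤ gObj p w e k σ :=
  single_le_sum (f := fun i => (e i - e (i + 1)) * ∑ ℓ, dev p w σ (e i) ℓ ^ 2)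
    (fun j hj => mul_nonneg (sub_nonneg.2 (hmono j (mem_range.1 hj)))
      (sum_nonneg fun _ _ => sq_nonneg _)) (mem_range.2 hi)

theorem gObj_le_of_abs_mLoad_zero_sub_mLoad_one_le {e : ℕ → ℚ} {k : ℕ}
    (hmono : ∀ i < k, e (i + 1) ≤ e i) {τ : Fin n → Fin 2} {B : ℚ}
    (hτ : ∀ t, |mLoad p w τ t 0 - mLoad p w τ t 1| ≤ B) :
    gObj p w e k τ ≤ (e 0 - e k) * B ^ 2 / 2 := by
  calc gObj p w e k τ ≤ ∑ i ∈ range k, (e i - e (i + 1)) * (B ^ 2 / 2) := by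
        refine sum_le_sum fun i hi => mul_le_mul_of_nonneg_left ?_
          (sub_nonneg.2 (hmono i (mem_range.1 hi)))
        rw [sum_sq_dev_fin_two, ← sq_abs]
        gcongr
        exact hτ _
    _ = (e 0 - e k) * B ^ 2 / 2 := by rw [← sum_mul, sum_range_sub']; ring

theorem mul_sq_le_of_fObj_le {e : ℕ → ℚ} {k i : ℕ} (hmono : ∀ i < k, e (i + 1) ≤ e i)
    (hi : i < k) {σ τ : Fin n → Fin 2} (hopt : fObj p w e k σ ≤ fObj p w e k τ) {B : ℚ}
    (hτ : ∀ t, |mLoad p w τ t 0 - mLoad p w τ t 1| ≤ B) :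
    (e i - e (i + 1)) * (mLoad p w σ (e i) 0 - mLoad p w σ (e i) 1) ^ 2 ≤ (e 0 - e k) * B ^ 2 := by
  have := calc (e i - e (i + 1)) * (mLoad p w σ (e i) 0 - mLoad p w σ (e i) 1) ^ 2 / 2
      = (e i - e (i + 1)) * ∑ ℓ, dev p w σ (e i) ℓ ^ 2 := by rw [sum_sq_dev_fin_two]; ring
    _ ≤ gObj p w e k σ := mul_sum_sq_dev_le_gObj p w hmono σ hi
    _ ≤ gObj p w e k τ := gObj_le_gObj_of_fObj_le p w two_ne_zero hopt
    _ ≤ (e 0 - e k) * B ^ 2 / 2 := gObj_le_of_abs_mLoad_zero_sub_mLoad_one_le p w hmono hτ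
  linarith

end Loads

theorem one_div_sq_le_div_sub_div {a b c d P : ℕ} (hc : 0 < c) (hd : 0 < d) (hcP : c ≤ P)
    (hdP : d ≤ P) (h : (b : ℚ) / d < a / c) : 1 / (P : ℚ) ^ 2 ≤ a / c - b / d := by
  have hc' : (0 : ℚ) < c := by exact_mod_cast hc
  have hd' : (0 : ℚ) < d := by exact_mod_cast hd
  rw [div_lt_div_iff₀ hd' hc'] at h
  have h1 : (b : ℚ) * c + 1 ≤ a * d := by exact_mod_cast (by exact_mod_cast h : b * c < a * d)
  calc 1 / (P : ℚ) ^ 2 ≤ 1 / (c * d) := by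
        gcongr
        calc (c : ℚ) * d ≤ P * P := by gcongr
          _ = P ^ 2 := (sq _).symm
    _ ≤ (a * d - b * c) / (c * d) := by gcongr; linarith
    _ = a / c - b / d := by field_simp

theorem one_div_sq_le_sub_succ {k n pmax : ℕ} {p w : Fin n → ℕ} (hp : ∀ j, 0 < p j)
    (hpmax : ∀ j, p j ≤ pmax) {e : ℕ → ℚ} (hdec : ∀ i < k, e (i + 1) < e i) (hek : e k = 0)
    (hrng : ∀ i < k, ∃ j, (w j : ℚ) / (p j : ℚ) = e i) {i : ℕ} (hi : i < k) :
    1 / (pmax : ℚ) ^ 2 ≤ e i - e (i + 1) := by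
  obtain ⟨a, ha⟩ := hrng i hi
  obtain ⟨b, d, hd, hdP, hb⟩ : ∃ b d : ℕ, 0 < d ∧ d ≤ pmax ∧ (b : ℚ) / d = e (i + 1) := by
    rcases (show i + 1 ≤ k from hi).lt_or_eq with hik | hik
    · obtain ⟨j, hj⟩ := hrng (i + 1) hik
      exact ⟨w j, p j, hp j, hpmax j, hj⟩
    · exact ⟨0, 1, one_pos, (hp a).trans_le (hpmax a), by rw [hik, hek]; simp⟩
  rw [← ha, ← hb]
  exact one_div_sq_le_div_sub_div (hp a) hd (hpmax a) hdP (by rw [ha, hb]; exact hdec i hi)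

theorem abs_le_sqrt_mul_of_sq_le {x a b : ℝ} (ha : 0 ≤ a) (hb : 0 ≤ b) (h : x ^ 2 ≤ a * b ^ 2) :
    |x| ≤ √a * b := by
  rw [← Real.sqrt_sq hb, ← Real.sqrt_mul ha]
  exact Real.abs_le_sqrt h

theorem stmt_17_general (k n pmax wmax : ℕ)
    (p w : Fin n → ℕ)
    (hp : ∀ j, 0 < p j) (hpmax : ∀ j, p j ≤ pmax)
    (hwmax : ∀ j, w j ≤ wmax)
    (e : ℕ → ℚ) (hdec : ∀ i < k, e (i + 1) < e i) (hek : e k = 0)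
    (hrng : ∀ i < k, ∃ j, (w j : ℚ) / (p j : ℚ) = e i)
    (σ : Fin n → Fin 2)
    (hopt : ∀ τ : Fin n → Fin 2, fObj p w e k σ ≤ fObj p w e k τ) :
    ∀ i < k,
      |((mLoad p w σ (e i) 0 - mLoad p w σ (e i) 1 : ℚ) : ℝ)|
        ≤ Real.sqrt (wmax : ℝ) * (pmax : ℝ) ^ 2 := by
  intro i hi
  set δ := mLoad p w σ (e i) 0 - mLoad p w σ (e i) 1
  have he0 : e 0 ≤ wmax := by
    obtain ⟨a, ha⟩ := hrng 0 (Nat.zero_lt_of_lt hi)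
    rw [← ha]
    exact (div_le_self (Nat.cast_nonneg _) (by exact_mod_cast hp a)).trans
      (by exact_mod_cast hwmax a)
  have hpmax_pos : (0 : ℚ) < pmax := by
    obtain ⟨a, -⟩ := hrng i hi
    exact_mod_cast (hp a).trans_le (hpmax a)
  obtain ⟨τ, hτ⟩ := exists_abs_mLoad_zero_sub_mLoad_one_le p w hpmax
  have hδ : δ ^ 2 / pmax ^ 2 ≤ wmax * pmax ^ 2 := calc
    δ ^ 2 / pmax ^ 2 = 1 / pmax ^ 2 * δ ^ 2 := by ring
    _ ≤ (e i - e (i + 1)) * δ ^ 2 := by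
      gcongr
      exact one_div_sq_le_sub_succ hp hpmax hdec hek hrng hi
    _ ≤ (e 0 - e k) * pmax ^ 2 :=
      mul_sq_le_of_fObj_le p w (fun i hi => (hdec i hi).le) hi (hopt τ) hτ
    _ ≤ wmax * pmax ^ 2 := by rw [hek, sub_zero]; gcongr
  rw [div_le_iff₀ (by positivity), mul_assoc, ← sq] at hδ
  exact abs_le_sqrt_mul_of_sq_le (Nat.cast_nonneg _) (by positivity) (by exact_mod_cast hδ)

theorem stmt_17 (k n pmax wmax : ℕ) (hk : 0 < k)
    (p w : Fin n → ℕ)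
    (hp : ∀ j, 0 < p j) (hpmax : ∀ j, p j ≤ pmax)
    (hw : ∀ j, 0 < w j) (hwmax : ∀ j, w j ≤ wmax)
    (e : ℕ → ℚ) (hdec : ∀ i < k, e (i + 1) < e i) (hek : e k = 0)
    (hcov : ∀ j, ∃ i < k, (w j : ℚ) / (p j : ℚ) = e i)
    (hrng : ∀ i < k, ∃ j, (w j : ℚ) / (p j : ℚ) = e i)
    (σ : Fin n → Fin 2)
    (hopt : ∀ τ : Fin n → Fin 2, fObj p w e k σ ≤ fObj p w e k τ) :
    ∀ i < k,
      |((mLoad p w σ (e i) 0 - mLoad p w σ (e i) 1 : ℚ) : ℝ)|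
        ≤ Real.sqrt (wmax : ℝ) * (pmax : ℝ) ^ 2 :=
  stmt_17_general k n pmax wmax p w hp hpmax hwmax e hdec hek hrng σ hopt
end
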